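/- arXiv:math/0005210 — 3 statements merged into one kernel-verified Lean document; each statement's English description precedes it below -/
import Mathlib

section
/- Coboundedness principle: suppose a finitely generated group G quasi-acts properly and coboundedly (with constants K, C) on a metric space X, and H is a collection of subsets of X such that (i) distinct elements of H are pairwise coarsely inequivalent, (ii) there is A ≥ 0 such that for each g ∈ G and H ∈ H there is H' ∈ H with g·H ≈ H' [A], and (iii) every metric ball in X meets only finitely many elements of H. Then for each H ∈ H, the stabilizer Stab_G(H) = {g ∈ G : g·H ≈ H} is a subgroup of G and the restricted quasi-action of Stab_G(H) on H is proper and cobounded. -/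
/-- The closed `R`-neighborhood of a subset of a metric space. -/
def nbhd {X : Type*} [MetricSpace X] (R : ℝ) (A : Set X) : Set X :=
  {x | ∃ a ∈ A, dist a x ≤ R}

/-- Coarse equivalence with constant `R`. -/
def CoarseEquivWith {X : Type*} [MetricSpace X] (R : ℝ) (A B : Set X) : Prop :=
  A ⊆ nbhd R B ∧ B ⊆ nbhd R A

/-- Coarse equivalence of subsets. -/
def CoarseEquiv {X : Type*} [MetricSpace X] (A B : Set X) : Prop :=
  ∃ R : ℝ, 0 ≤ R ∧ CoarseEquivWith R A B

/-- A `(K,C)` quasi-isometric embedding. -/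
def IsQIEmbedding {X Y : Type*} [MetricSpace X] [MetricSpace Y]
    (K C : ℝ) (f : X → Y) : Prop :=
  ∀ x y : X, dist x y / K - C ≤ dist (f x) (f y) ∧ dist (f x) (f y) ≤ K * dist x y + C

/-- A `(K,C)` quasi-isometry. -/
def IsQuasiIsometry {X Y : Type*} [MetricSpace X] [MetricSpace Y]
    (K C : ℝ) (f : X → Y) : Prop :=
  IsQIEmbedding K C f ∧ ∀ y : Y, ∃ x : X, dist (f x) y ≤ C

/-- A `(K,C)` quasi-action of a group `G` on a metric space `X`. -/
def IsQuasiAction {G X : Type*} [Group G] [MetricSpace X]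
    (K C : ℝ) (act : G → X → X) : Prop :=
  (∀ g : G, IsQuasiIsometry K C (act g)) ∧
  (∀ (g h : G) (x : X), dist (act g (act h x)) (act (g * h) x) ≤ C)

/-- Coboundedness of a quasi-action. -/
def QACobounded {G X : Type*} [Group G] [MetricSpace X] (act : G → X → X) : Prop :=
  ∃ R : ℝ, ∀ x y : X, ∃ g : G, dist (act g x) y ≤ R

/-- Properness of a quasi-action. -/
def QAProper {G X : Type*} [Group G] [MetricSpace X] (act : G → X → X) : Prop :=
  ∀ R : ℝ, ∃ M : ℕ, ∀ x y : X,
    {g : G | ∃ z : X, dist z x ≤ R ∧ dist (act g z) y ≤ R}.Finite ∧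
    {g : G | ∃ z : X, dist z x ≤ R ∧ dist (act g z) y ≤ R}.ncard ≤ M

section Aux

variable {G X : Type*} [Group G] [MetricSpace X]

theorem nbhd_trans {R R' : ℝ} {A B C : Set X} (h1 : A ⊆ nbhd R B) (h2 : B ⊆ nbhd R' C) :
    A ⊆ nbhd (R + R') C := by
  intro x hx
  obtain ⟨b, hb, hbx⟩ := h1 hx
  obtain ⟨c, hc, hcb⟩ := h2 hb
  exact ⟨c, hc, by linarith [dist_triangle c b x]⟩

theorem ce_symm {A B : Set X} (h : CoarseEquiv A B) : CoarseEquiv B A := by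
  obtain ⟨R, hR, h1, h2⟩ := h; exact ⟨R, hR, h2, h1⟩

theorem ce_trans {A B C : Set X} (h : CoarseEquiv A B) (h' : CoarseEquiv B C) :
    CoarseEquiv A C := by
  obtain ⟨R, hR, h1, h2⟩ := h
  obtain ⟨R', hR', h1', h2'⟩ := h'
  exact ⟨R + R', by linarith, nbhd_trans h1 h1', by rw [add_comm]; exact nbhd_trans h2' h2⟩

theorem ce_image {K C : ℝ} (hK : 0 ≤ K) (hC : 0 ≤ C) {f : X → X}
    (hf : ∀ x y, dist (f x) (f y) ≤ K * dist x y + C) {A B : Set X}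
    (h : CoarseEquiv A B) : CoarseEquiv (f '' A) (f '' B) := by
  obtain ⟨R, hR, h1, h2⟩ := h
  refine ⟨K * R + C, by positivity, ?_, ?_⟩
  · rintro _ ⟨a, ha, rfl⟩
    obtain ⟨b, hb, hba⟩ := h1 ha
    exact ⟨f b, ⟨b, hb, rfl⟩, (hf b a).trans (by nlinarith)⟩
  · rintro _ ⟨a, ha, rfl⟩
    obtain ⟨b, hb, hba⟩ := h2 ha
    exact ⟨f b, ⟨b, hb, rfl⟩, (hf b a).trans (by nlinarith)⟩

theorem ce_pointwise {D : ℝ} (hD : 0 ≤ D) {f g : X → X}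
    (h : ∀ x, dist (f x) (g x) ≤ D) (A : Set X) :
    CoarseEquiv (f '' A) (g '' A) := by
  refine ⟨D, hD, ?_, ?_⟩
  · rintro _ ⟨a, ha, rfl⟩
    exact ⟨g a, ⟨a, ha, rfl⟩, by rw [dist_comm]; exact h a⟩
  · rintro _ ⟨a, ha, rfl⟩
    exact ⟨f a, ⟨a, ha, rfl⟩, h a⟩

variable {K C : ℝ} {act : G → X → X}

theorem qa_upper (hact : IsQuasiAction K C act) (g : G) (x y : X) :
    dist (act g x) (act g y) ≤ K * dist x y + C := ((hact.1 g).1 x y).2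

theorem qa_one_close (hK : 1 ≤ K) (hC : 0 ≤ C) (hact : IsQuasiAction K C act) (x : X) :
    dist (act (1:G) x) x ≤ K * C + 3 * C := by
  obtain ⟨z, hz⟩ := (hact.1 1).2 x
  have h1 : dist (act 1 (act 1 z)) (act 1 z) ≤ C := by simpa using hact.2 1 1 z
  have h2 := qa_upper hact 1 x (act 1 z)
  have h3 : dist x (act 1 z) ≤ C := by rw [dist_comm]; exact hz
  have h4 := dist_triangle4 (act (1:G) x) (act 1 (act 1 z)) (act 1 z) x
  nlinarith [mul_le_mul_of_nonneg_left h3 (by linarith : (0:ℝ) ≤ K)]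

theorem qa_inv_close (hK : 1 ≤ K) (hC : 0 ≤ C) (hact : IsQuasiAction K C act) (g : G) (x : X) :
    dist (act g⁻¹ (act g x)) x ≤ C + (K * C + 3 * C) := by
  have h1 : dist (act g⁻¹ (act g x)) (act 1 x) ≤ C := by simpa using hact.2 g⁻¹ g x
  have h2 := qa_one_close hK hC hact (act := act) x
  have h3 := dist_triangle (act g⁻¹ (act g x)) (act 1 x) x
  linarith

theorem qa_comp_close (hact : IsQuasiAction K C act) (g h : G) (x : X) :
    dist (act (g * h) x) (act g (act h x)) ≤ C := by
  rw [dist_comm]; exact hact.2 g h x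

theorem ce_comp_right (hC : 0 ≤ C) (hact : IsQuasiAction K C act)
    (g h : G) (A : Set X) :
    CoarseEquiv (act (g * h) '' A) (act g '' (act h '' A)) := by
  rw [← Set.image_comp]
  exact ce_pointwise hC (fun x => qa_comp_close hact g h x) A

theorem ce_inv_comp (hK : 1 ≤ K) (hC : 0 ≤ C) (hact : IsQuasiAction K C act)
    (g : G) (A : Set X) :
    CoarseEquiv (act g⁻¹ '' (act g '' A)) A := by
  have h := ce_pointwise (f := act g⁻¹ ∘ act g) (g := id)
    (D := C + (K * C + 3 * C)) (by nlinarith)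
    (fun x => qa_inv_close hK hC hact g x) A
  rw [Set.image_comp, Set.image_id] at h
  exact h

theorem stab_one (hK : 1 ≤ K) (hC : 0 ≤ C) (hact : IsQuasiAction K C act) (H₀ : Set X) :
    CoarseEquiv (act (1:G) '' H₀) H₀ := by
  have h := ce_pointwise (f := act (1:G)) (g := id) (D := K * C + 3 * C)
    (by nlinarith) (fun x => qa_one_close hK hC hact x) H₀
  rw [Set.image_id] at h
  exact h

theorem stab_mul (hK : 1 ≤ K) (hC : 0 ≤ C) (hact : IsQuasiAction K C act)
    {g h : G} {H₀ : Set X} (hg : CoarseEquiv (act g '' H₀) H₀)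
    (hh : CoarseEquiv (act h '' H₀) H₀) : CoarseEquiv (act (g * h) '' H₀) H₀ :=
  ce_trans (ce_comp_right hC hact g h H₀)
    (ce_trans (ce_image (by linarith) hC (qa_upper hact g) hh) hg)

theorem stab_inv (hK : 1 ≤ K) (hC : 0 ≤ C) (hact : IsQuasiAction K C act)
    {g : G} {H₀ : Set X} (hg : CoarseEquiv (act g '' H₀) H₀) :
    CoarseEquiv (act g⁻¹ '' H₀) H₀ :=
  ce_trans (ce_image (by linarith) hC (qa_upper hact g⁻¹) (ce_symm hg))
    (ce_inv_comp hK hC hact g H₀)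

theorem stab_subgroup (hK : 1 ≤ K) (hC : 0 ≤ C) (hact : IsQuasiAction K C act)
    (H₀ : Set X) :
    ∃ S : Subgroup G, (S : Set G) = {g : G | CoarseEquiv (act g '' H₀) H₀} :=
  ⟨{ carrier := {g : G | CoarseEquiv (act g '' H₀) H₀}
     one_mem' := stab_one hK hC hact H₀
     mul_mem' := fun ha hb => stab_mul hK hC hact ha hb
     inv_mem' := fun ha => stab_inv hK hC hact ha }, rfl⟩

end Aux

theorem key_claim {G X : Type*} [Group G] [MetricSpace X] {K C : ℝ} (hK : 1 ≤ K) (hC : 0 ≤ C)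
    {act : G → X → X} (hact : IsQuasiAction K C act) (hcobdd : QACobounded act)
    {𝓗 : Set (Set X)}
    (hequiv : ∃ A : ℝ, 0 ≤ A ∧ ∀ (g : G), ∀ H ∈ 𝓗, ∃ H' ∈ 𝓗,
      CoarseEquivWith A (act g '' H) H')
    (hlocfin : ∀ (x : X) (r : ℝ), {H ∈ 𝓗 | (H ∩ Metric.closedBall x r).Nonempty}.Finite)
    {H₀ : Set X} (hH₀ : H₀ ∈ 𝓗) {x₀ : X} (hx₀ : x₀ ∈ H₀) :
    ∃ Rc : ℝ, ∀ y ∈ H₀, ∃ g : G, CoarseEquiv (act g '' H₀) H₀ ∧ dist (act g x₀) y ≤ Rc := by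
  obtain ⟨R₀, hcob⟩ := hcobdd
  obtain ⟨A, hA, hAeq⟩ := hequiv
  choose h hh using fun y : X => hcob y x₀
  choose Φ hΦ1 hΦ2 using fun g : G => hAeq g H₀ hH₀
  set T : Set (Set X) := (fun y => Φ (h y)) '' H₀ with hTdef
  have hTF : T ⊆ {H ∈ 𝓗 | (H ∩ Metric.closedBall x₀ (A + R₀)).Nonempty} := by
    rintro _ ⟨y, hy, rfl⟩
    refine ⟨hΦ1 (h y), ?_⟩
    obtain ⟨a, ha, haa⟩ := (hΦ2 (h y)).1 ⟨y, hy, rfl⟩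
    refine ⟨a, ha, ?_⟩
    rw [Metric.mem_closedBall]
    have h1 := hh y
    have h2 := dist_triangle a (act (h y) y) x₀
    linarith
  have hTfin : T.Finite := (hlocfin x₀ (A + R₀)).subset hTF
  have hw : ∀ H ∈ T, ∃ y, y ∈ H₀ ∧ Φ (h y) = H := by
    rintro _ ⟨y, hy, rfl⟩; exact ⟨y, hy, rfl⟩
  haveI : Nonempty X := ⟨x₀⟩
  choose! w hw1 hw2 using hw
  obtain ⟨D, hD⟩ := (hTfin.image fun H => dist (act (h (w H)) x₀) x₀).bddAbove
  refine ⟨C + (K * D + C) + (K * R₀ + C) + (C + (K * C + 3 * C)), ?_⟩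
  intro y hy
  have hHT : Φ (h y) ∈ T := ⟨y, hy, rfl⟩
  set a := h y with hadef
  set y' := w (Φ (h y)) with hy'def
  set b := h y' with hbdef
  have hy' : y' ∈ H₀ := hw1 _ hHT
  have hbH : Φ b = Φ a := hw2 _ hHT
  refine ⟨a⁻¹ * b, ?_, ?_⟩
  · have c1 : CoarseEquiv (act (a⁻¹ * b) '' H₀) (act a⁻¹ '' (act b '' H₀)) :=
      ce_comp_right hC hact _ _ _
    have c2 : CoarseEquiv (act b '' H₀) (act a '' H₀) := by
      have cb : CoarseEquiv (act b '' H₀) (Φ a) := by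
        rw [← hbH]; exact ⟨A, hA, hΦ2 b⟩
      have ca : CoarseEquiv (act a '' H₀) (Φ a) := ⟨A, hA, hΦ2 a⟩
      exact ce_trans cb (ce_symm ca)
    have c3 := ce_image (f := act a⁻¹) (by linarith) hC (qa_upper hact a⁻¹) c2
    exact ce_trans c1 (ce_trans c3 (ce_inv_comp hK hC hact a H₀))
  · have d1 := qa_comp_close hact a⁻¹ b x₀
    have d2 : dist (act b x₀) x₀ ≤ D := hD ⟨Φ (h y), hHT, rfl⟩
    have d3 : dist (act a⁻¹ (act b x₀)) (act a⁻¹ x₀) ≤ K * D + C := by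
      have h1 := qa_upper hact a⁻¹ (act b x₀) x₀
      nlinarith [mul_le_mul_of_nonneg_left d2 (by linarith : (0:ℝ) ≤ K)]
    have d4 : dist (act a⁻¹ x₀) (act a⁻¹ (act a y)) ≤ K * R₀ + C := by
      have h1 := qa_upper hact a⁻¹ x₀ (act a y)
      have h2 : dist x₀ (act a y) ≤ R₀ := by rw [dist_comm]; exact hh y
      nlinarith [mul_le_mul_of_nonneg_left h2 (by linarith : (0:ℝ) ≤ K)]
    have d5 := qa_inv_close hK hC hact a y
    have t1 := dist_triangle4 (act (a⁻¹ * b) x₀) (act a⁻¹ (act b x₀)) (act a⁻¹ x₀) y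
    have t2 := dist_triangle (act a⁻¹ x₀) (act a⁻¹ (act a y)) y
    linarith


/-- Coboundedness principle: under a proper cobounded quasi-action of a finitely
generated group `G` on `X`, for any suitable `G`-almost-invariant, locally finite
collection `𝓗` of pairwise coarsely inequivalent subsets of `X`, the coarse stabilizer
of each `H₀ ∈ 𝓗` is a subgroup of `G` which quasi-acts properly and coboundedly
on `H₀`. -/
theorem coboundedness_principle {G X : Type*} [Group G] [MetricSpace X]
    (hfg : ∃ S : Finset G, Subgroup.closure (S : Set G) = ⊤)
    (K C : ℝ) (hK : 1 ≤ K) (hC : 0 ≤ C) (act : G → X → X)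
    (hact : IsQuasiAction K C act) (hproper : QAProper act) (hcobdd : QACobounded act)
    (𝓗 : Set (Set X))
    (hineq : ∀ H H' : Set X, H ∈ 𝓗 → H' ∈ 𝓗 → H ≠ H' → ¬ CoarseEquiv H H')
    (hequiv : ∃ A : ℝ, 0 ≤ A ∧ ∀ (g : G), ∀ H ∈ 𝓗, ∃ H' ∈ 𝓗,
      CoarseEquivWith A (act g '' H) H')
    (hlocfin : ∀ (x : X) (r : ℝ), {H ∈ 𝓗 | (H ∩ Metric.closedBall x r).Nonempty}.Finite)
    (H₀ : Set X) (hH₀ : H₀ ∈ 𝓗) :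
    (∃ S : Subgroup G, (S : Set G) = {g : G | CoarseEquiv (act g '' H₀) H₀}) ∧
    -- the restricted quasi-action of the stabilizer on H₀ is cobounded:
    (∃ R : ℝ, ∀ x ∈ H₀, ∀ y ∈ H₀, ∃ g : G,
        CoarseEquiv (act g '' H₀) H₀ ∧ dist (act g x) y ≤ R) ∧
    -- and proper:
    (∀ R : ℝ, ∃ M : ℕ, ∀ x ∈ H₀, ∀ y ∈ H₀,
      {g : G | CoarseEquiv (act g '' H₀) H₀ ∧
        ∃ z ∈ H₀, dist z x ≤ R ∧ dist (act g z) y ≤ R}.Finite ∧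
      {g : G | CoarseEquiv (act g '' H₀) H₀ ∧
        ∃ z ∈ H₀, dist z x ≤ R ∧ dist (act g z) y ≤ R}.ncard ≤ M) := by
  refine ⟨stab_subgroup hK hC hact H₀, ?_, ?_⟩
  · rcases H₀.eq_empty_or_nonempty with hE | ⟨x₀, hx₀⟩
    · exact ⟨0, by simp [hE]⟩
    · obtain ⟨Rc, hRc⟩ := key_claim hK hC hact hcobdd hequiv hlocfin hH₀ hx₀
      refine ⟨C + (K * (K * Rc + C + (C + (K * C + 3 * C))) + C) + Rc, ?_⟩
      intro x hx y hy
      obtain ⟨g₁, hg₁s, hg₁⟩ := hRc x hx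
      obtain ⟨g₂, hg₂s, hg₂⟩ := hRc y hy
      refine ⟨g₂ * g₁⁻¹, stab_mul hK hC hact hg₂s (stab_inv hK hC hact hg₁s), ?_⟩
      have e1 := qa_comp_close hact g₂ g₁⁻¹ x
      have e2 : dist (act g₁⁻¹ x) (act g₁⁻¹ (act g₁ x₀)) ≤ K * Rc + C := by
        have h1 := qa_upper hact g₁⁻¹ x (act g₁ x₀)
        have h2 : dist x (act g₁ x₀) ≤ Rc := by rw [dist_comm]; exact hg₁
        nlinarith [mul_le_mul_of_nonneg_left h2 (by linarith : (0:ℝ) ≤ K)]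
      have e3 := qa_inv_close hK hC hact g₁ x₀
      have e4 : dist (act g₁⁻¹ x) x₀ ≤ K * Rc + C + (C + (K * C + 3 * C)) := by
        have := dist_triangle (act g₁⁻¹ x) (act g₁⁻¹ (act g₁ x₀)) x₀
        linarith
      have e5 : dist (act g₂ (act g₁⁻¹ x)) (act g₂ x₀) ≤
          K * (K * Rc + C + (C + (K * C + 3 * C))) + C := by
        have h1 := qa_upper hact g₂ (act g₁⁻¹ x) x₀
        nlinarith [mul_le_mul_of_nonneg_left e4 (by linarith : (0:ℝ) ≤ K)]
      have t := dist_triangle4 (act (g₂ * g₁⁻¹) x) (act g₂ (act g₁⁻¹ x)) (act g₂ x₀) y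
      linarith
  · intro R
    obtain ⟨M, hM⟩ := hproper R
    refine ⟨M, fun x hx y hy => ?_⟩
    have hsub : {g : G | CoarseEquiv (act g '' H₀) H₀ ∧
        ∃ z ∈ H₀, dist z x ≤ R ∧ dist (act g z) y ≤ R} ⊆
        {g : G | ∃ z : X, dist z x ≤ R ∧ dist (act g z) y ≤ R} := by
      rintro g ⟨_, z, _, hz1, hz2⟩; exact ⟨z, hz1, hz2⟩
    exact ⟨(hM x y).1.subset hsub,
      le_trans (Set.ncard_le_ncard hsub (hM x y).1) (hM x y).2⟩
end

section
/- Quasi-edges have bounded overlap: let T be a bushy, bounded-valence tree, and let {O, O'} be a partition of Ends(T) into two nonempty disjoint clopen sets. Then N₁(Hull(O)) ∩ N₁(Hull(O')) is a bounded subset of T, where Hull(O) is the union of all bi-infinite geodesics with both ends in O (the convex hull of O). -/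
open SimpleGraph

/-- The natural topology on the space of ends of a graph. -/
def endTopology {V : Type*} (G : SimpleGraph V) : TopologicalSpace ↥G.end :=
  letI : ∀ j : (Finset V)ᵒᵖ, TopologicalSpace (G.componentComplFunctor.obj j) := fun _ => ⊥
  inferInstance

/-- A bi-infinite geodesic line in a graph. -/
def IsGeodLine {V : Type*} (G : SimpleGraph V) (γ : ℤ → V) : Prop :=
  ∀ m n : ℤ, (G.dist (γ m) (γ n) : ℤ) = |m - n|

/-- The positive end of the line `γ` lies in the set `O` of ends. -/
def PosEndIn {V : Type*} (G : SimpleGraph V) (γ : ℤ → V) (O : Set ↥G.end) : Prop :=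
  ∃ s ∈ O, ∀ j : (Finset V)ᵒᵖ, ∃ N : ℤ, ∀ n ≥ N, γ n ∈ (s.val j).supp

/-- The negative end of the line `γ` lies in the set `O` of ends. -/
def NegEndIn {V : Type*} (G : SimpleGraph V) (γ : ℤ → V) (O : Set ↥G.end) : Prop :=
  ∃ s ∈ O, ∀ j : (Finset V)ᵒᵖ, ∃ N : ℤ, ∀ n ≤ N, γ n ∈ (s.val j).supp

/-- The convex hull of a set `O` of ends: the union of all bi-infinite geodesics both of
whose ends lie in `O`. -/
def endHull {V : Type*} (G : SimpleGraph V) (O : Set ↥G.end) : Set V :=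
  {x | ∃ γ : ℤ → V, IsGeodLine G γ ∧ PosEndIn G γ O ∧ NegEndIn G γ O ∧ ∃ n : ℤ, γ n = x}

/-- The closed 1-neighborhood of a set of vertices, in the graph metric. -/
def nbhdOne {V : Type*} (G : SimpleGraph V) (A : Set V) : Set V :=
  {x | ∃ a ∈ A, G.dist x a ≤ 1}

/-!
Because `O` is clopen and the end space is compact, membership of an end in `O` is decided by
the component of `T ∖ K` it points into, for one finite set of vertices `K`. A point of `Hull(O)`
outside `K` whose component of `T ∖ K` carries no end of `O` lies on a geodesic that leaves
this component in both directions, hence meets `K` on both sides of the point; this puts the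
point within `diam K` of `K`. A point near both hulls is either of this kind for `O` or `O'`,
or lies within distance `2` of a crossing into another component, hence of `K`.
-/

open CategoryTheory Opposite

namespace CategoryTheory.Functor

variable {J : Type*} [Category J] (F : J ⥤ Type*) [∀ j, TopologicalSpace (F.obj j)]

theorem isClosed_sections [∀ j, DiscreteTopology (F.obj j)] : IsClosed F.sections := by
  have : F.sections = ⋂ (j) (j') (f : j ⟶ j'), {u | F.map f (u j) = u j'} := by
    ext u
    simp [sections]
  rw [this]
  exact isClosed_iInter fun j => isClosed_iInter fun j' => isClosed_iInter fun _ =>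
    isClosed_eq (continuous_of_discreteTopology.comp (continuous_apply j)) (continuous_apply j')

theorem compactSpace_sections [∀ j, DiscreteTopology (F.obj j)] [∀ j, Finite (F.obj j)] :
    CompactSpace F.sections :=
  isCompact_iff_compactSpace.mp F.isClosed_sections.isCompact

variable [IsCofiltered J]

theorem exists_forall_mem_of_isOpen {U : Set (∀ j, F.obj j)} (hU : IsOpen U) {s : ∀ j, F.obj j}
    (hsF : s ∈ F.sections) (hsU : s ∈ U) : ∃ j, ∀ t ∈ F.sections, t j = s j → t ∈ U := by
  obtain ⟨I, u, hIu, hIU⟩ := isOpen_pi_iff.mp hU s hsU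
  refine ⟨IsCofiltered.inf I ∅, fun t htF hts => hIU fun i hi => ?_⟩
  have hti : t i = s i := by
    rw [← htF (IsCofiltered.infTo I ∅ hi), ← hsF (IsCofiltered.infTo I ∅ hi), hts]
  exact hti ▸ (hIu i hi).2

theorem exists_forall_mem_of_isClopen [∀ j, DiscreteTopology (F.obj j)]
    [∀ j, Finite (F.obj j)] {O : Set F.sections}
    (hO : IsClopen O) : ∃ j, ∀ s ∈ O, ∀ t : F.sections, t.val j = s.val j → t ∈ O := by
  have := F.compactSpace_sections
  have : Nonempty J := IsCofiltered.nonempty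
  let W : J → Set F.sections := fun j => {s | ∀ t : F.sections, t.val j = s.val j → t ∈ O}
  have hW_open : ∀ j, IsOpen (W j) := fun j =>
    (isOpen_discrete {c | ∀ t : F.sections, t.val j = c → t ∈ O}).preimage
      ((continuous_apply j).comp continuous_subtype_val)
  have hOW : O ⊆ ⋃ j, W j := by
    intro s hs
    obtain ⟨U, hU, rfl⟩ := isOpen_induced_iff.mp hO.isOpen
    obtain ⟨j, hj⟩ := F.exists_forall_mem_of_isOpen hU s.2 hs
    exact Set.mem_iUnion.mpr ⟨j, fun t ht => hj t.val t.2 ht⟩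
  have hW_directed : Directed (· ⊆ ·) W := fun j j' =>
    ⟨IsCofiltered.min j j',
      fun s hs t ht => hs t (by rw [← t.2 (IsCofiltered.minToLeft j j'), ht, s.2]),
      fun s hs t ht => hs t (by rw [← t.2 (IsCofiltered.minToRight j j'), ht, s.2])⟩
  obtain ⟨j, hj⟩ := hO.isClosed.isCompact.elim_directed_cover W hW_open hOW hW_directed
  exact ⟨j, fun s hs => hj hs⟩

end CategoryTheory.Functor

namespace SimpleGraph

variable {V : Type*} {G : SimpleGraph V}

theorem exists_finset_forall_mem_of_isClopen [LocallyFinite G] (hG : G.Preconnected)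
    {O : Set G.end} (hO : @IsClopen _ (endTopology G) O) :
    ∃ K : Finset V, ∀ s ∈ O, ∀ t : G.end, t.val (op K) = s.val (op K) → t ∈ O := by
  -- the topologies `endTopology` is built from, so that `hO` is read in the subspace topology
  let _ : ∀ j : (Finset V)ᵒᵖ, TopologicalSpace (G.componentComplFunctor.obj j) := fun _ => ⊥
  have : ∀ j : (Finset V)ᵒᵖ, DiscreteTopology (G.componentComplFunctor.obj j) :=
    fun _ => ⟨rfl⟩
  have : Fact G.Preconnected := ⟨hG⟩
  have : ∀ j : (Finset V)ᵒᵖ, Finite (G.componentComplFunctor.obj j) :=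
    fun j => G.componentCompl_finite j.unop
  obtain ⟨j, hj⟩ := G.componentComplFunctor.exists_forall_mem_of_isClopen hO
  exact ⟨j.unop, hj⟩

theorem ComponentCompl.eq_of_mem_of_mem {K : Set V} {C D : G.ComponentCompl K} {v : V}
    (hC : v ∈ C) (hD : v ∈ D) : C = D :=
  hC.choose_spec.symm.trans hD.choose_spec

theorem Walk.exists_mem_support_of_mem_of_notMem {K : Set V} {C : G.ComponentCompl K} :
    ∀ {u v : V} (w : G.Walk u v), u ∈ C → v ∉ C → ∃ k ∈ w.support, k ∈ K
  | _, _, .nil, hu, hv => absurd hu hv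
  | _, _, .cons (v := b) h p, hu, hv => by
    by_cases hbK : b ∈ K
    · exact ⟨b, by simp, hbK⟩
    · obtain ⟨k, hk, hkK⟩ :=
        p.exists_mem_support_of_mem_of_notMem (ComponentCompl.mem_of_adj _ b hu hbK h) hv
      exact ⟨k, by simp [hk], hkK⟩

theorem Walk.dist_add_dist_le_length {u v k : V} (w : G.Walk u v) (hk : k ∈ w.support) :
    G.dist u k + G.dist k v ≤ w.length := by
  classical
  calc G.dist u k + G.dist k v ≤ (w.takeUntil k hk).length + (w.dropUntil k hk).length :=
        add_le_add (dist_le _) (dist_le _)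
    _ = w.length := by rw [← Walk.length_append, Walk.take_spec]

theorem ComponentCompl.exists_dist_add_dist_le (hG : G.Connected) {K : Set V}
    {C : G.ComponentCompl K} {a b : V} (ha : a ∈ C) (hb : b ∉ C) :
    ∃ k ∈ K, G.dist a k + G.dist k b ≤ G.dist a b := by
  obtain ⟨w, hw⟩ := hG.exists_walk_length_eq_dist a b
  obtain ⟨k, hkw, hkK⟩ := w.exists_mem_support_of_mem_of_notMem ha hb
  exact ⟨k, hkK, hw ▸ w.dist_add_dist_le_length hkw⟩

end SimpleGraph

namespace IsGeodLine

variable {V : Type*} {G : SimpleGraph V} {γ : ℤ → V}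

theorem dist_eq_sub (hγ : IsGeodLine G γ) {m n : ℤ} (h : m ≤ n) :
    (G.dist (γ m) (γ n) : ℤ) = n - m := by
  rw [hγ, abs_sub_comm, abs_of_nonneg (sub_nonneg.mpr h)]

theorem exists_dist_le_dist_of_notMem (hG : G.Connected) (hγ : IsGeodLine G γ) {K : Set V}
    {C : G.ComponentCompl K} {m t n : ℤ} (hmt : m ≤ t) (htn : t ≤ n) (ht : γ t ∈ C)
    (hm : γ m ∉ C) (hn : γ n ∉ C) : ∃ k₁ ∈ K, ∃ k₂ ∈ K, G.dist (γ t) k₂ ≤ G.dist k₁ k₂ := by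
  obtain ⟨k₁, hk₁, h₁⟩ := SimpleGraph.ComponentCompl.exists_dist_add_dist_le hG ht hm
  obtain ⟨k₂, hk₂, h₂⟩ := SimpleGraph.ComponentCompl.exists_dist_add_dist_le hG ht hn
  have hmt' := hγ.dist_eq_sub hmt
  have htn' := hγ.dist_eq_sub htn
  have hmn' := hγ.dist_eq_sub (hmt.trans htn)
  have hcomm₁ : G.dist (γ t) (γ m) = G.dist (γ m) (γ t) := SimpleGraph.dist_comm
  have hcomm₂ : G.dist (γ m) k₁ = G.dist k₁ (γ m) := SimpleGraph.dist_comm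
  have htri : G.dist (γ m) (γ n) ≤ G.dist (γ m) k₁ + (G.dist k₁ k₂ + G.dist k₂ (γ n)) :=
    hG.dist_triangle.trans (add_le_add le_rfl hG.dist_triangle)
  exact ⟨k₁, hk₁, k₂, hk₂, by omega⟩

end IsGeodLine

namespace SimpleGraph

variable {V : Type*} {G : SimpleGraph V} {K : Finset V} {D : ℕ}

theorem exists_dist_le_of_mem_endHull (hG : G.Connected)
    (hD : ∀ k₁ ∈ K, ∀ k₂ ∈ K, G.dist k₁ k₂ ≤ D) {O : Set G.end} {a : V}
    (ha : a ∈ endHull G O) {C : G.ComponentCompl (K : Set V)} (haC : a ∈ C)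
    (hC : ∀ s ∈ O, s.val (op K) ≠ C) : ∃ k ∈ K, G.dist a k ≤ D := by
  obtain ⟨γ, hγ, ⟨sp, hsp, hγp⟩, ⟨sm, hsm, hγm⟩, t, rfl⟩ := ha
  obtain ⟨Np, hNp⟩ := hγp (op K)
  obtain ⟨Nm, hNm⟩ := hγm (op K)
  have hout : ∀ s ∈ O, ∀ n, γ n ∈ (s.val (op K)).supp → γ n ∉ C := fun s hs _ hsn hC' =>
    hC s hs (ComponentCompl.eq_of_mem_of_mem (C := s.val (op K)) hsn hC')
  obtain ⟨k₁, hk₁, k₂, hk₂, hk⟩ := hγ.exists_dist_le_dist_of_notMem hG (min_le_left t Nm)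
    (le_max_left t Np) haC (hout sm hsm _ (hNm _ (min_le_right _ _)))
    (hout sp hsp _ (hNp _ (le_max_right _ _)))
  exact ⟨k₂, hk₂, hk.trans (hD k₁ hk₁ k₂ hk₂)⟩

theorem exists_dist_le_of_mem_nbhdOne_inter (hG : G.Connected)
    (hD : ∀ k₁ ∈ K, ∀ k₂ ∈ K, G.dist k₁ k₂ ≤ D) {O O' : Set G.end}
    (hsep : ∀ s ∈ O, ∀ s' ∈ O', s.val (op K) ≠ s'.val (op K)) {z : V}
    (hz : z ∈ nbhdOne G (endHull G O) ∩ nbhdOne G (endHull G O')) :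
    ∃ k ∈ K, G.dist z k ≤ D + 3 := by
  obtain ⟨⟨a, ha, hza⟩, ⟨b, hb, hzb⟩⟩ := hz
  have via : ∀ {c k : V}, G.dist z c ≤ 1 → G.dist c k ≤ D + 2 → G.dist z k ≤ D + 3 :=
    fun {c _} hzc hck => (hG.dist_triangle (v := c)).trans (by omega)
  by_cases haK : a ∈ (K : Set V)
  · exact ⟨a, haK, by omega⟩
  set C := G.componentComplMk haK
  have haC : a ∈ C := G.componentComplMk_mem haK
  by_cases hCO : ∃ s ∈ O, s.val (op K) = C
  · obtain ⟨s, hs, hsC⟩ := hCO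
    by_cases hbC : b ∈ C
    · obtain ⟨k, hk, hbk⟩ := exists_dist_le_of_mem_endHull hG hD hb hbC
        fun s' hs' hs'C => hsep s hs s' hs' (hsC.trans hs'C.symm)
      exact ⟨k, hk, via hzb (by omega)⟩
    · obtain ⟨k, hk, hakb⟩ := ComponentCompl.exists_dist_add_dist_le hG haC hbC
      have hab : G.dist a b ≤ G.dist a z + G.dist z b := hG.dist_triangle
      have haz : G.dist a z = G.dist z a := dist_comm
      exact ⟨k, hk, via hza (by omega)⟩
  · push Not at hCO
    obtain ⟨k, hk, hak⟩ := exists_dist_le_of_mem_endHull hG hD ha haC hCO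
    exact ⟨k, hk, via hza (by omega)⟩

end SimpleGraph

theorem quasi_edge_bounded_overlap_general {V : Type*} (G : SimpleGraph V)
    (hT : G.IsTree) [LocallyFinite G]
    (O O' : Set ↥G.end)
    (hO : @IsClopen _ (endTopology G) O)
    (hdisj : Disjoint O O') :
    ∃ D : ℕ, ∀ x ∈ nbhdOne G (endHull G O) ∩ nbhdOne G (endHull G O'),
      ∀ y ∈ nbhdOne G (endHull G O) ∩ nbhdOne G (endHull G O'),
        G.dist x y ≤ D := by
  have hG := hT.connected
  obtain ⟨K, hK⟩ := exists_finset_forall_mem_of_isClopen hG.preconnected hO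
  have hsep : ∀ s ∈ O, ∀ s' ∈ O', s.val (op K) ≠ s'.val (op K) := fun s hs s' hs' hss' =>
    Set.disjoint_left.mp hdisj (hK s hs s' hss'.symm) hs'
  obtain ⟨D, hD⟩ : ∃ D, ∀ k₁ ∈ K, ∀ k₂ ∈ K, G.dist k₁ k₂ ≤ D := ⟨_, fun _ h₁ _ h₂ =>
    Finset.le_sup (f := fun p : V × V => G.dist p.1 p.2) (Finset.mk_mem_product h₁ h₂)⟩
  refine ⟨3 * D + 6, fun x hx y hy => ?_⟩
  obtain ⟨kx, hkx, hxkx⟩ := exists_dist_le_of_mem_nbhdOne_inter hG hD hsep hx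
  obtain ⟨ky, hky, hyky⟩ := exists_dist_le_of_mem_nbhdOne_inter hG hD hsep hy
  have hkyy : G.dist ky y = G.dist y ky := dist_comm
  calc G.dist x y ≤ G.dist x kx + (G.dist kx ky + G.dist ky y) :=
        hG.dist_triangle.trans (add_le_add le_rfl hG.dist_triangle)
    _ ≤ 3 * D + 6 := by have := hD kx hkx ky hky; omega

/-- Quasi-edges have bounded overlap: if `{O, O'}` is a partition of the ends of a bushy
bounded-valence tree into two nonempty disjoint clopen sets, then the intersection of the
1-neighborhoods of their convex hulls is bounded. -/
theorem quasi_edge_bounded_overlap {V : Type*} (G : SimpleGraph V)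
    (hT : G.IsTree) [LocallyFinite G] (Vbd : ℕ) (hval : ∀ v : V, G.degree v ≤ Vbd)
    (hbushy : Infinite ↥G.end)
    (O O' : Set ↥G.end)
    (hO : @IsClopen _ (endTopology G) O) (hO' : @IsClopen _ (endTopology G) O')
    (hOne : O.Nonempty) (hO'ne : O'.Nonempty)
    (hdisj : Disjoint O O') (hunion : O ∪ O' = Set.univ) :
    ∃ D : ℕ, ∀ x ∈ nbhdOne G (endHull G O) ∩ nbhdOne G (endHull G O'),
      ∀ y ∈ nbhdOne G (endHull G O) ∩ nbhdOne G (endHull G O'),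
        G.dist x y ≤ D :=
  quasi_edge_bounded_overlap_general G hT O O' hO hdisj
end

section
/- There is no quasi-isometric embedding f : ℝᴺ → ℝⁿ when N > n. -/
open Metric MeasureTheory ENNReal

private lemma coord_abs_le_dist {N : ℕ} (x y : EuclideanSpace ℝ (Fin N)) (i : Fin N) :
    |x i - y i| ≤ dist x y := by
  rw [EuclideanSpace.dist_eq]
  have h1 : |x i - y i| = Real.sqrt (dist (x i) (y i) ^ 2) := by
    rw [Real.sqrt_sq_eq_abs, Real.dist_eq, abs_abs]
  rw [h1]
  exact Real.sqrt_le_sqrt (Finset.single_le_sum (f := fun j => dist (x j) (y j) ^ 2)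
    (fun j _ => sq_nonneg _) (Finset.mem_univ i))

private lemma dist_le_of_coords {N : ℕ} (x y : EuclideanSpace ℝ (Fin N)) (M : ℝ) (hM : 0 ≤ M)
    (hc : ∀ i, |x i - y i| ≤ M) : dist x y ≤ Real.sqrt N * M := by
  rw [EuclideanSpace.dist_eq]
  have hsum : ∑ i, dist (x i) (y i) ^ 2 ≤ (N : ℝ) * M ^ 2 := by
    calc ∑ i, dist (x i) (y i) ^ 2 ≤ ∑ _i : Fin N, M ^ 2 := by
          refine Finset.sum_le_sum fun i _ => ?_
          rw [Real.dist_eq]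
          exact pow_le_pow_left₀ (abs_nonneg _) (hc i) 2
      _ = (N : ℝ) * M ^ 2 := by simp [Finset.sum_const, nsmul_eq_mul]
  calc Real.sqrt (∑ i, dist (x i) (y i) ^ 2) ≤ Real.sqrt ((N : ℝ) * M ^ 2) :=
        Real.sqrt_le_sqrt hsum
    _ = Real.sqrt N * M := by
        rw [Real.sqrt_mul (Nat.cast_nonneg N), Real.sqrt_sq hM]

private lemma one_le_abs_sub_of_ne {a b : ℕ} (h : a ≠ b) : (1 : ℝ) ≤ |(a : ℝ) - b| := by
  have h' : (a : ℤ) - b ≠ 0 := sub_ne_zero.mpr (by exact_mod_cast h)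
  have := Int.one_le_abs h'
  have : ((1 : ℤ) : ℝ) ≤ (|(a : ℤ) - b| : ℝ) := by exact_mod_cast this
  simpa [abs_sub_comm] using this

/-- There is no quasi-isometric embedding of `ℝᴺ` into `ℝⁿ` when `N > n`. -/
theorem no_qie_euclidean_down (N n : ℕ) (h : n < N) :
    ¬ ∃ (f : EuclideanSpace ℝ (Fin N) → EuclideanSpace ℝ (Fin n)) (K C : ℝ),
        1 ≤ K ∧ 0 ≤ C ∧ IsQIEmbedding K C f := by
  rintro ⟨f, K, C, hK, hC, hf⟩
  have hK0 : (0 : ℝ) < K := lt_of_lt_of_le one_pos hK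
  -- the separation scale
  set s : ℝ := K * (C + 1) with hs_def
  have hs_pos : 0 < s := by positivity
  -- points at distance ≥ s map to points at distance ≥ 1
  have key : ∀ x y : EuclideanSpace ℝ (Fin N), s ≤ dist x y →
      (1 : ℝ) ≤ dist (f x) (f y) := by
    intro x y hxy
    have h1 := (hf x y).1
    have : C + 1 ≤ dist x y / K := by
      rw [le_div_iff₀ hK0]; nlinarith
    linarith
  -- the positive-index of N
  have hN0 : 0 < N := lt_of_le_of_lt (Nat.zero_le n) h
  -- case n = 0 : target is a single point
  rcases Nat.eq_zero_or_pos n with hn | hn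
  · subst hn
    have i0 : Fin N := ⟨0, hN0⟩
    set x : EuclideanSpace ℝ (Fin N) := (WithLp.equiv 2 (Fin N → ℝ)).symm 0
    set y : EuclideanSpace ℝ (Fin N) := (WithLp.equiv 2 (Fin N → ℝ)).symm (fun _ => s)
    have hxy : s ≤ dist x y := by
      have := coord_abs_le_dist x y i0
      simpa [x, y, abs_of_pos hs_pos] using this
    have h1 := key x y hxy
    have : f x = f y := Subsingleton.elim _ _
    rw [this, dist_self] at h1
    linarith
  -- main case: volume argument
  haveI : NeZero n := ⟨hn.ne'⟩
  -- choose m large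
  set A : ℝ := K * Real.sqrt N * s + C + 1 with hA_def
  have hA1 : 1 ≤ A := by
    have : 0 ≤ K * Real.sqrt N * s := by positivity
    linarith
  obtain ⟨m, hm⟩ := exists_nat_gt ((2 * A) ^ n)
  have hm1 : (1 : ℝ) ≤ (m : ℝ) := by
    have h2A : (1 : ℝ) ≤ (2 * A) ^ n := one_le_pow₀ (by linarith)
    linarith
  -- the lattice points
  set p : (Fin N → Fin (m + 1)) → EuclideanSpace ℝ (Fin N) :=
    fun v => (WithLp.equiv 2 (Fin N → ℝ)).symm (fun i => s * ((v i : ℕ) : ℝ)) with hp_def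
  have hp_apply : ∀ v i, p v i = s * ((v i : ℕ) : ℝ) := fun v i => rfl
  -- separation of lattice points
  have hsep : ∀ v w : Fin N → Fin (m + 1), v ≠ w → s ≤ dist (p v) (p w) := by
    intro v w hvw
    obtain ⟨i, hi⟩ := Function.ne_iff.mp hvw
    have hne : (v i : ℕ) ≠ (w i : ℕ) := fun hh => hi (Fin.ext hh)
    have h1 : (1 : ℝ) ≤ |((v i : ℕ) : ℝ) - ((w i : ℕ) : ℝ)| := one_le_abs_sub_of_ne hne
    have h2 : |p v i - p w i| = s * |((v i : ℕ) : ℝ) - ((w i : ℕ) : ℝ)| := by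
      rw [hp_apply, hp_apply, ← mul_sub, abs_mul, abs_of_pos hs_pos]
    have h3 : s ≤ |p v i - p w i| := by
      rw [h2]
      nlinarith [abs_nonneg (((v i : ℕ) : ℝ) - ((w i : ℕ) : ℝ))]
    exact h3.trans (coord_abs_le_dist _ _ i)
  -- the base point
  set v0 : Fin N → Fin (m + 1) := fun _ => ⟨0, Nat.succ_pos m⟩ with hv0_def
  -- diameter bound on the lattice
  have hdiam : ∀ v, dist (p v) (p v0) ≤ Real.sqrt N * (s * m) := by
    intro v
    refine dist_le_of_coords _ _ _ (by positivity) fun i => ?_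
    rw [hp_apply, hp_apply]
    simp only [v0]
    rw [Nat.cast_zero, mul_zero, sub_zero, abs_mul, abs_of_pos hs_pos]
    have : ((v i : ℕ) : ℝ) ≤ (m : ℝ) := by
      exact_mod_cast Nat.le_of_lt_succ (v i).isLt
    have h0 : (0 : ℝ) ≤ ((v i : ℕ) : ℝ) := Nat.cast_nonneg _
    rw [abs_of_nonneg h0]
    nlinarith
  -- the image points
  set g : (Fin N → Fin (m + 1)) → EuclideanSpace ℝ (Fin n) := fun v => f (p v) with hg_def
  have hgsep : ∀ v w, v ≠ w → (1 : ℝ) ≤ dist (g v) (g w) :=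
    fun v w hvw => key _ _ (hsep v w hvw)
  set R : ℝ := K * (Real.sqrt N * (s * m)) + C with hR_def
  have hR0 : 0 ≤ R := by positivity
  have hgdiam : ∀ v, dist (g v) (g v0) ≤ R := by
    intro v
    have h2 := (hf (p v) (p v0)).2
    have := hdiam v
    have hKd : K * dist (p v) (p v0) ≤ K * (Real.sqrt N * (s * m)) :=
      mul_le_mul_of_nonneg_left this (le_of_lt hK0)
    calc dist (g v) (g v0) ≤ K * dist (p v) (p v0) + C := h2
      _ ≤ R := by rw [hR_def]; linarith
  -- disjoint balls
  have hdisj : ((Finset.univ : Finset (Fin N → Fin (m + 1))) : Set (Fin N → Fin (m + 1))).PairwiseDisjoint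
      (fun v => ball (g v) (1 / 2)) := by
    intro v _ w _ hvw
    exact ball_disjoint_ball (by linarith [hgsep v w hvw])
  -- balls inside a big ball
  have hsub : ∀ v, ball (g v) (1 / 2) ⊆ closedBall (g v0) (R + 1 / 2) := by
    intro v z hz
    rw [mem_ball] at hz
    rw [mem_closedBall]
    calc dist z (g v0) ≤ dist z (g v) + dist (g v) (g v0) := dist_triangle _ _ _
      _ ≤ R + 1 / 2 := by linarith [hgdiam v]
  -- volume computation
  have hvol : ∑ v : Fin N → Fin (m + 1), volume (ball (g v) (1 / 2))
      ≤ volume (closedBall (g v0) (R + 1 / 2)) := by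
    rw [← measure_biUnion_finset hdisj (fun v _ => measurableSet_ball)]
    exact measure_mono (Set.iUnion₂_subset fun v _ => hsub v)
  set c : ℝ≥0∞ := ENNReal.ofReal (Real.sqrt Real.pi ^ n / Real.Gamma (n / 2 + 1)) with hc_def
  have hc0 : c ≠ 0 := by
    rw [hc_def, Ne, ENNReal.ofReal_eq_zero, not_le]
    have hg : 0 < Real.Gamma ((n : ℝ) / 2 + 1) := by
      apply Real.Gamma_pos_of_pos; positivity
    have hpi : 0 < Real.sqrt Real.pi := Real.sqrt_pos.mpr Real.pi_pos
    positivity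
  have hctop : c ≠ ⊤ := ENNReal.ofReal_ne_top
  have hball : ∀ (x : EuclideanSpace ℝ (Fin n)) (r : ℝ),
      volume (ball x r) = (ENNReal.ofReal r) ^ n * c := by
    intro x r
    have := EuclideanSpace.volume_ball (Fin n) x r
    simpa [hc_def] using this
  have hcball : volume (closedBall (g v0) (R + 1 / 2))
      = (ENNReal.ofReal (R + 1 / 2)) ^ n * c := by
    have := EuclideanSpace.volume_closedBall (Fin n) (g v0) (R + 1 / 2)
    simpa [hc_def] using this
  have hcard : (Fintype.card (Fin N → Fin (m + 1)) : ℝ≥0∞) = ((m + 1 : ℕ) : ℝ≥0∞) ^ N := by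
    simp [Fintype.card_fun]
  have hvol2 : ((m + 1 : ℕ) : ℝ≥0∞) ^ N * ((ENNReal.ofReal (1 / 2)) ^ n * c)
      ≤ (ENNReal.ofReal (R + 1 / 2)) ^ n * c := by
    calc ((m + 1 : ℕ) : ℝ≥0∞) ^ N * ((ENNReal.ofReal (1 / 2)) ^ n * c)
        = ∑ v : Fin N → Fin (m + 1), volume (ball (g v) (1 / 2)) := by
          simp only [hball, Finset.sum_const, nsmul_eq_mul]
          rw [← hcard]
          simp [Fintype.card_fun]
      _ ≤ _ := hvol.trans_eq hcball
  -- cancel c and convert to reals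
  have hvol3 : ((m + 1 : ℕ) : ℝ≥0∞) ^ N * (ENNReal.ofReal (1 / 2)) ^ n
      ≤ (ENNReal.ofReal (R + 1 / 2)) ^ n := by
    rw [← ENNReal.mul_le_mul_iff_left hc0 hctop, mul_assoc]
    exact hvol2
  have hreal : ((m + 1 : ℕ) : ℝ) ^ N * (1 / 2 : ℝ) ^ n ≤ (R + 1 / 2) ^ n := by
    have lhs_eq : ((m + 1 : ℕ) : ℝ≥0∞) ^ N * (ENNReal.ofReal (1 / 2)) ^ n
        = ENNReal.ofReal (((m + 1 : ℕ) : ℝ) ^ N * (1 / 2 : ℝ) ^ n) := by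
      rw [ENNReal.ofReal_mul (by positivity), ENNReal.ofReal_pow (show (0:ℝ) ≤ ((m + 1 : ℕ) : ℝ) from Nat.cast_nonneg _),
        ENNReal.ofReal_pow (by norm_num : (0:ℝ) ≤ 1/2), ENNReal.ofReal_natCast]
    rw [lhs_eq, ← ENNReal.ofReal_pow (by positivity)] at hvol3
    exact (ENNReal.ofReal_le_ofReal_iff (by positivity)).mp hvol3
  -- final arithmetic contradiction
  have hRm : R + 1 / 2 ≤ A * m := by
    rw [hR_def, hA_def]
    have h1 : K * Real.sqrt N * s * 1 ≤ K * Real.sqrt N * s * m := by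
      apply mul_le_mul_of_nonneg_left hm1; positivity
    nlinarith
  have hineq1 : ((m + 1 : ℕ) : ℝ) ^ N ≤ (2 * A) ^ n * (m : ℝ) ^ n := by
    have h2 : (R + 1 / 2) ^ n ≤ (A * m) ^ n :=
      pow_le_pow_left₀ (by positivity) hRm n
    have h3 : ((m + 1 : ℕ) : ℝ) ^ N * (1 / 2 : ℝ) ^ n ≤ (A * m) ^ n := hreal.trans h2
    have h4 : (0 : ℝ) < (1 / 2 : ℝ) ^ n := by positivity
    rw [← le_div_iff₀ h4] at h3
    calc ((m + 1 : ℕ) : ℝ) ^ N ≤ (A * m) ^ n / (1 / 2) ^ n := h3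
      _ = (2 * A) ^ n * (m : ℝ) ^ n := by
          rw [← div_pow, ← mul_pow]
          congr 1
          field_simp
  have hmono : ((m + 1 : ℕ) : ℝ) ^ (n + 1) ≤ ((m + 1 : ℕ) : ℝ) ^ N := by
    apply pow_le_pow_right₀
    · push_cast; linarith
    · omega
  have hmn : ((m : ℝ)) ^ n ≤ ((m + 1 : ℕ) : ℝ) ^ n := by
    apply pow_le_pow_left₀ (by linarith)
    push_cast; linarith
  have hfinal : ((m + 1 : ℕ) : ℝ) ≤ (2 * A) ^ n := by
    have hpos : (0 : ℝ) < ((m + 1 : ℕ) : ℝ) ^ n := by positivity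
    have : ((m + 1 : ℕ) : ℝ) * ((m + 1 : ℕ) : ℝ) ^ n ≤ (2 * A) ^ n * ((m + 1 : ℕ) : ℝ) ^ n := by
      calc ((m + 1 : ℕ) : ℝ) * ((m + 1 : ℕ) : ℝ) ^ n = ((m + 1 : ℕ) : ℝ) ^ (n + 1) := by
            rw [pow_succ]; ring
        _ ≤ ((m + 1 : ℕ) : ℝ) ^ N := hmono
        _ ≤ (2 * A) ^ n * (m : ℝ) ^ n := hineq1
        _ ≤ (2 * A) ^ n * ((m + 1 : ℕ) : ℝ) ^ n := by
            apply mul_le_mul_of_nonneg_left hmn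
            positivity
    exact le_of_mul_le_mul_right this hpos
  have : ((m + 1 : ℕ) : ℝ) < (m : ℝ) := lt_of_le_of_lt hfinal hm
  push_cast at this
  linarith
end
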